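/- Suppose v(x) > 0 for all x ∈ [0,Q). Then in the bidpoint-constrained auctions with M bid points, minimax loss in the uniform-price auction is strictly lower than in the pay-as-bid auction: min over M-point bids of L^LAB < min over M-point bids of L^PAB. -/

import Mathlib

open MeasureTheory intervalIntegral

noncomputable section

/-- Positive part `(x)₊ = max(x,0)`. -/
def pos (x : ℝ) : ℝ := max x 0

/-- An `M`-point bid `(q,b)`: `0 = q_0 ≤ q_1 ≤ … ≤ q_M ≤ Q` and `b_1 ≥ … ≥ b_M ≥ 0`. -/
def IsBidPts (Q : ℝ) (M : ℕ) (q b : ℕ → ℝ) : Prop :=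
  q 0 = 0 ∧ (∀ k, k < M → q k ≤ q (k + 1)) ∧ q M ≤ Q ∧
    (∀ k, 1 ≤ k → k < M → b (k + 1) ≤ b k) ∧ 0 ≤ b M

/-- The step bid function induced by the `M`-point bid `(q,b)`:
`b̂(x) = b_k` for `q_{k−1} ≤ x < q_k` and `b̂(x) = 0` for `x ≥ q_M`. -/
def bhat (M : ℕ) (q b : ℕ → ℝ) (x : ℝ) : ℝ :=
  ∑ k ∈ Finset.Icc 1 M, if q (k - 1) ≤ x ∧ x < q k then b k else 0

/-- Conditional regret at quantity `t` in the bidpoint-constrained pay-as-bid auction: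
`R^PAB_t(q,b) = ∫_0^t (b̂(x) − b̂(t)) dx + ∫_t^Q (v(x) − b̂(t))₊ dx`. -/
def Rcpab (Q : ℝ) (M : ℕ) (v : ℝ → ℝ) (q b : ℕ → ℝ) (t : ℝ) : ℝ :=
  (∫ x in (0:ℝ)..t, (bhat M q b x - bhat M q b t))
    + ∫ x in t..Q, pos (v x - bhat M q b t)

/-- Loss in the bidpoint-constrained pay-as-bid auction:
`L^PAB(q,b) = sup_{t ∈ [0,Q]} R^PAB_t(q,b)`. -/
def Lcpab (Q : ℝ) (M : ℕ) (v : ℝ → ℝ) (q b : ℕ → ℝ) : ℝ :=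
  sSup {r : ℝ | ∃ t ∈ Set.Icc (0:ℝ) Q, r = Rcpab Q M v q b t}

/-- A minimax-loss `M`-point bid in the constrained pay-as-bid auction. -/
def IsMinimaxCPAB (Q : ℝ) (M : ℕ) (v : ℝ → ℝ) (q b : ℕ → ℝ) : Prop :=
  IsBidPts Q M q b ∧ ∀ q' b', IsBidPts Q M q' b' → Lcpab Q M v q b ≤ Lcpab Q M v q' b'

/-- Loss in the bidpoint-constrained uniform-price auction:
`L^LAB(q,b) = max( max_{1≤k≤M} max( q_k·b_k , ∫_{q_{k−1}}^Q (v(x) − b_k)₊ dx ) , ∫_{q_M}^Q v )`. -/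
def Lclab (Q : ℝ) (M : ℕ) (hM : 1 ≤ M) (v : ℝ → ℝ) (q b : ℕ → ℝ) : ℝ :=
  max ((Finset.Icc 1 M).sup' (Finset.nonempty_Icc.mpr hM)
        (fun k => max (q k * b k) (∫ x in q (k - 1)..Q, pos (v x - b k))))
      (∫ x in q M..Q, v x)

/-- A minimax-loss `M`-point bid in the constrained uniform-price auction. -/
def IsMinimaxCLAB (Q : ℝ) (M : ℕ) (hM : 1 ≤ M) (v : ℝ → ℝ) (q b : ℕ → ℝ) : Prop :=
  IsBidPts Q M q b ∧
    ∀ q' b', IsBidPts Q M q' b' → Lclab Q M hM v q b ≤ Lclab Q M hM v q' b'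

/-- The marginal value function: weakly decreasing, nonnegative and integrable on `[0,Q]`. -/
def IsValueFn (Q : ℝ) (v : ℝ → ℝ) : Prop :=
  AntitoneOn v (Set.Icc 0 Q) ∧ (∀ x ∈ Set.Icc (0:ℝ) Q, 0 ≤ v x) ∧
    IntervalIntegrable v volume 0 Q

/-!
Every pay-as-bid bid `(q, b)` with loss `L` is beaten by some uniform-price bid by a margin `δ > 0`
that does not depend on `(q, b)`. Write `P(x) = ∫₀ˣ b̂` for the payment. The regret at `t = x` gives
`P(x) + ∫ₓ^Q v - Q b̂(x) ≤ L`, and together with `(x - u) b̂(x) ≤ P(x) - P(u)` this bounds `L` below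
uniformly and shows that a bid cannot pay almost `L` before a quantity beyond which value remains.

If the total payment `P(Q)` is tiny, then `L` is close to `∫₀^Q v`, and a flat bid at a fixed level
does better. Otherwise cap the quantities at `Q - s` and raise every bid by a small `θ`: the terms
`q_k b_k` stay below `L` since the payment is not concentrated early, the value left uncovered after
`q_M` is smaller than `L` by the payment, and raising the bids lowers each tail regret
`∫ (v - b_k)₊` by a definite amount unless it is already small.
-/

open Set

lemma pos_le_of_le {x c : ℝ} (h : x ≤ c) (hc : 0 ≤ c) : pos x ≤ c := max_le h hc

lemma pos_mono : Monotone pos := fun _ _ h => max_le_max h le_rfl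

lemma min_le_pos_sub_sub_pos_sub {a β θ η : ℝ} (hθ : 0 ≤ θ) (ha : β + η ≤ a) :
    min θ η ≤ pos (a - β) - pos (a - (β + θ)) := by
  have := min_le_left θ η
  have := min_le_right θ η
  unfold pos
  rw [max_def, max_def]
  split_ifs <;> linarith

lemma IntervalIntegrable.pos {f : ℝ → ℝ} {a b : ℝ} (hf : IntervalIntegrable f volume a b) :
    IntervalIntegrable (fun x => pos (f x)) volume a b :=
  intervalIntegrable_iff.2 (intervalIntegrable_iff.1 hf).pos_part

lemma mul_le_integral_of_le_Ioo {f : ℝ → ℝ} {a b c : ℝ} (hab : a ≤ b)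
    (hf : IntervalIntegrable f volume a b) (h : ∀ x ∈ Ioo a b, c ≤ f x) :
    (b - a) * c ≤ ∫ x in a..b, f x := by
  simpa using integral_mono_on_of_le_Ioo hab intervalIntegrable_const hf h

lemma integral_le_mul_of_le_Ioo {f : ℝ → ℝ} {a b c : ℝ} (hab : a ≤ b)
    (hf : IntervalIntegrable f volume a b) (h : ∀ x ∈ Ioo a b, f x ≤ c) :
    ∫ x in a..b, f x ≤ (b - a) * c := by
  simpa using integral_mono_on_of_le_Ioo hab hf intervalIntegrable_const h

lemma exists_pos_le_mul_le {Q V ε : ℝ} (hQ : 0 < Q) (hV : 0 ≤ V) (hε : 0 < ε) :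
    ∃ s, 0 < s ∧ s ≤ Q ∧ s * V ≤ ε := by
  refine ⟨min Q (ε / (V + 1)), lt_min hQ (by positivity), min_le_left _ _, ?_⟩
  calc min Q (ε / (V + 1)) * V ≤ ε / (V + 1) * (V + 1) :=
        mul_le_mul (min_le_right _ _) (by linarith) hV (by positivity)
    _ = ε := div_mul_cancel₀ _ (by positivity)

namespace IsBidPts

variable {Q : ℝ} {M : ℕ} {q b : ℕ → ℝ}

lemma q_mono (h : IsBidPts Q M q b) {i j : ℕ} (hij : i ≤ j) (hj : j ≤ M) : q i ≤ q j := by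
  induction j, hij using Nat.le_induction with
  | base => exact le_rfl
  | succ n _ ih => exact (ih (by omega)).trans (h.2.1 n (by omega))

lemma q_nonneg (h : IsBidPts Q M q b) {k : ℕ} (hk : k ≤ M) : 0 ≤ q k :=
  h.1 ▸ h.q_mono (Nat.zero_le k) hk

lemma q_le (h : IsBidPts Q M q b) {k : ℕ} (hk : k ≤ M) : q k ≤ Q :=
  (h.q_mono hk le_rfl).trans h.2.2.1

lemma b_anti (h : IsBidPts Q M q b) {i j : ℕ} (hi : 1 ≤ i) (hij : i ≤ j) (hj : j ≤ M) :
    b j ≤ b i := by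
  induction j, hij using Nat.le_induction with
  | base => exact le_rfl
  | succ n hin ih => exact (h.2.2.2.1 n (hi.trans hin) (by omega)).trans (ih (by omega))

lemma b_nonneg (h : IsBidPts Q M q b) {k : ℕ} (hk1 : 1 ≤ k) (hk : k ≤ M) : 0 ≤ b k :=
  h.2.2.2.2.trans (h.b_anti hk1 hk le_rfl)

lemma bhat_eq (h : IsBidPts Q M q b) {j : ℕ} {x : ℝ} (hj1 : 1 ≤ j) (hjM : j ≤ M)
    (hx : x ∈ Ico (q (j - 1)) (q j)) : bhat M q b x = b j := by
  rw [bhat, Finset.sum_eq_single_of_mem j (Finset.mem_Icc.mpr ⟨hj1, hjM⟩)]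
  · exact if_pos hx
  intro k hk hkj
  have hkM := (Finset.mem_Icc.mp hk).2
  refine if_neg fun ⟨hkx, hxk⟩ => ?_
  rcases lt_or_gt_of_ne hkj with hlt | hgt
  · linarith [hx.1, h.q_mono (show k ≤ j - 1 by omega) (by omega)]
  · linarith [hx.2, h.q_mono (show j ≤ k - 1 by omega) (by omega)]

lemma bhat_eq_zero (h : IsBidPts Q M q b) {x : ℝ} (hx : q M ≤ x) : bhat M q b x = 0 :=
  Finset.sum_eq_zero fun _ hk =>
    if_neg fun hk' => (hx.trans_lt hk'.2).not_ge (h.q_mono (Finset.mem_Icc.mp hk).2 le_rfl)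

lemma bhat_eq_zero_or (h : IsBidPts Q M q b) (x : ℝ) :
    bhat M q b x = 0 ∨ ∃ j, 1 ≤ j ∧ j ≤ M ∧ x ∈ Ico (q (j - 1)) (q j) ∧ bhat M q b x = b j := by
  by_cases hx : ∃ j ∈ Finset.Icc 1 M, x ∈ Ico (q (j - 1)) (q j)
  · obtain ⟨j, hj, hxj⟩ := hx
    obtain ⟨hj1, hjM⟩ := Finset.mem_Icc.mp hj
    exact Or.inr ⟨j, hj1, hjM, hxj, h.bhat_eq hj1 hjM hxj⟩
  · exact Or.inl (Finset.sum_eq_zero fun k hk => if_neg fun hxk => hx ⟨k, hk, hxk⟩)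

lemma bhat_nonneg (h : IsBidPts Q M q b) (x : ℝ) : 0 ≤ bhat M q b x := by
  rcases h.bhat_eq_zero_or x with h0 | ⟨j, hj1, hjM, -, hj⟩
  · exact h0.ge
  · exact hj ▸ h.b_nonneg hj1 hjM

lemma le_bhat (h : IsBidPts Q M q b) {k : ℕ} (hk1 : 1 ≤ k) (hkM : k ≤ M) {x : ℝ}
    (hx0 : 0 ≤ x) (hxk : x < q k) : b k ≤ bhat M q b x := by
  induction k, hk1 using Nat.le_induction with
  | base => exact (h.bhat_eq le_rfl hkM ⟨by simpa [h.1] using hx0, hxk⟩).ge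
  | succ n hn ih =>
    by_cases hxn : x < q n
    · exact (h.2.2.2.1 n hn (by omega)).trans (ih (by omega) hxn)
    · exact (h.bhat_eq (by omega) hkM ⟨by simpa using not_lt.1 hxn, hxk⟩).ge

lemma bhat_antitoneOn (h : IsBidPts Q M q b) : AntitoneOn (bhat M q b) (Ici 0) := by
  intro x hx y _ hxy
  rcases h.bhat_eq_zero_or y with h0 | ⟨j, hj1, hjM, hyj, hj⟩
  · exact h0 ▸ h.bhat_nonneg x
  · exact hj ▸ h.le_bhat hj1 hjM hx (hxy.trans_lt hyj.2)

lemma bhat_q_sub_one_le (h : IsBidPts Q M q b) {k : ℕ} (hk1 : 1 ≤ k) (hkM : k ≤ M) :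
    bhat M q b (q (k - 1)) ≤ b k := by
  rcases h.bhat_eq_zero_or (q (k - 1)) with h0 | ⟨j, _, hjM, hj, hbj⟩
  · exact h0 ▸ h.b_nonneg hk1 hkM
  · rw [hbj]
    refine h.b_anti hk1 (not_lt.1 fun hjk => ?_) hjM
    exact hj.2.not_ge (h.q_mono (show j ≤ k - 1 by omega) (by omega))

end IsBidPts

variable {Q : ℝ} {M : ℕ} {q b : ℕ → ℝ}

lemma intervalIntegrable_bhat (q b : ℕ → ℝ) (x y : ℝ) :
    IntervalIntegrable (bhat M q b) volume x y := by
  have : bhat M q b = ∑ k ∈ Finset.Icc 1 M, (Ico (q (k - 1)) (q k)).indicator fun _ => b k := by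
    funext x
    simp only [bhat, Finset.sum_apply, indicator, mem_Ico]
  rw [this]
  refine IntervalIntegrable.sum _ fun k _ => (Integrable.intervalIntegrable ?_)
  exact (integrable_indicator_iff measurableSet_Ico).2 (integrableOn_const measure_Ico_lt_top.ne)

namespace IsValueFn

variable {v : ℝ → ℝ}

lemma intervalIntegrable_of_le (hv : IsValueFn Q v) {x y : ℝ} (hx : 0 ≤ x) (hxy : x ≤ y)
    (hy : y ≤ Q) :
    IntervalIntegrable v volume x y :=
  hv.2.2.mono_set (by
    rw [uIcc_of_le hxy, uIcc_of_le (hx.trans (hxy.trans hy))]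
    exact Icc_subset_Icc hx hy)

lemma intervalIntegrable_pos_sub (hv : IsValueFn Q v) {x y : ℝ} (hx : 0 ≤ x) (hxy : x ≤ y)
    (hy : y ≤ Q) (c : ℝ) :
    IntervalIntegrable (fun t => pos (v t - c)) volume x y :=
  ((hv.intervalIntegrable_of_le hx hxy hy).sub intervalIntegrable_const).pos

lemma le_apply_zero (hv : IsValueFn Q v) {x : ℝ} (hx : x ∈ Icc 0 Q) : v x ≤ v 0 :=
  hv.1 ⟨le_rfl, hx.1.trans hx.2⟩ hx hx.1

lemma integral_le_mul (hv : IsValueFn Q v) {x y : ℝ} (hx : 0 ≤ x) (hxy : x ≤ y) (hy : y ≤ Q) :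
    ∫ t in x..y, v t ≤ (y - x) * v 0 :=
  integral_le_mul_of_le_Ioo hxy (hv.intervalIntegrable_of_le hx hxy hy) fun _ ht =>
    hv.le_apply_zero ⟨hx.trans ht.1.le, ht.2.le.trans hy⟩

lemma integral_tail_anti (hv : IsValueFn Q v) {x y : ℝ} (hx : 0 ≤ x) (hxy : x ≤ y) (hy : y ≤ Q) :
    ∫ t in y..Q, v t ≤ ∫ t in x..Q, v t := by
  rw [← integral_add_adjacent_intervals (hv.intervalIntegrable_of_le hx hxy hy)
    (hv.intervalIntegrable_of_le (hx.trans hxy) hy le_rfl)]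
  have : 0 ≤ ∫ t in x..y, v t :=
    integral_nonneg hxy fun t ht => hv.2.1 t ⟨hx.trans ht.1, ht.2.trans hy⟩
  linarith

lemma integral_tail_nonneg (hv : IsValueFn Q v) {x : ℝ} (hx : 0 ≤ x) (hxQ : x ≤ Q) :
    0 ≤ ∫ t in x..Q, v t :=
  integral_nonneg hxQ fun t ht => hv.2.1 t ⟨hx.trans ht.1, ht.2⟩

lemma integral_pos_sub_le (hv : IsValueFn Q v) {x c : ℝ} (hx : 0 ≤ x) (hxQ : x ≤ Q) (hc : 0 ≤ c) :
    ∫ t in x..Q, pos (v t - c) ≤ ∫ t in x..Q, v t :=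
  integral_mono_on hxQ (hv.intervalIntegrable_pos_sub hx hxQ le_rfl c)
    (hv.intervalIntegrable_of_le hx hxQ le_rfl) fun t ht =>
      pos_le_of_le (by linarith) (hv.2.1 t ⟨hx.trans ht.1, ht.2⟩)

lemma integral_tail_pos (hv : IsValueFn Q v) (hvpos : ∀ x ∈ Ico (0 : ℝ) Q, 0 < v x) {x : ℝ}
    (hx : 0 ≤ x) (hxQ : x < Q) : 0 < ∫ t in x..Q, v t :=
  intervalIntegral_pos_of_pos_on (hv.intervalIntegrable_of_le hx hxQ.le le_rfl)
    (fun t ht => hvpos t ⟨hx.trans ht.1.le, ht.2⟩) hxQ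

end IsValueFn

variable {v : ℝ → ℝ}

lemma sub_mul_bhat_le (hb : IsBidPts Q M q b) {u x : ℝ} (hu : 0 ≤ u) (hux : u ≤ x) :
    (x - u) * bhat M q b x ≤ ∫ y in u..x, bhat M q b y :=
  mul_le_integral_of_le_Ioo hux (intervalIntegrable_bhat q b u x) fun _ hy =>
    hb.bhat_antitoneOn (mem_Ici.2 (hu.trans hy.1.le)) (mem_Ici.2 (hu.trans hux)) hy.2.le

lemma integral_bhat_mono (hb : IsBidPts Q M q b) {x y : ℝ} (hx : 0 ≤ x) (hxy : x ≤ y) :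
    ∫ t in (0 : ℝ)..x, bhat M q b t ≤ ∫ t in (0 : ℝ)..y, bhat M q b t :=
  integral_mono_interval le_rfl hx hxy (ae_of_all _ hb.bhat_nonneg)
    (intervalIntegrable_bhat q b 0 y)

lemma mul_le_integral_bhat (hb : IsBidPts Q M q b) {k : ℕ} (hk1 : 1 ≤ k) (hkM : k ≤ M) {u : ℝ}
    (hu : 0 ≤ u) (huk : u ≤ q k) : u * b k ≤ ∫ t in (0 : ℝ)..u, bhat M q b t := by
  simpa using mul_le_integral_of_le_Ioo hu (intervalIntegrable_bhat q b 0 u) fun x hx =>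
    hb.le_bhat hk1 hkM hx.1.le (hx.2.trans_le huk)

lemma Rcpab_le (hv : IsValueFn Q v) (hb : IsBidPts Q M q b) {t : ℝ} (ht : t ∈ Icc 0 Q) :
    Rcpab Q M v q b t ≤ (∫ y in (0 : ℝ)..Q, bhat M q b y) + ∫ y in (0 : ℝ)..Q, v y := by
  obtain ⟨ht0, htQ⟩ := ht
  have hpay : ∫ y in (0 : ℝ)..t, (bhat M q b y - bhat M q b t) ≤ ∫ y in (0 : ℝ)..Q, bhat M q b y :=
    calc _ ≤ ∫ y in (0 : ℝ)..t, bhat M q b y :=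
          integral_mono_on ht0 ((intervalIntegrable_bhat q b 0 t).sub intervalIntegrable_const)
            (intervalIntegrable_bhat q b 0 t) fun _ _ => sub_le_self _ (hb.bhat_nonneg t)
      _ ≤ _ := integral_bhat_mono hb ht0 htQ
  have hval : ∫ y in t..Q, pos (v y - bhat M q b t) ≤ ∫ y in (0 : ℝ)..Q, v y :=
    (hv.integral_pos_sub_le ht0 htQ (hb.bhat_nonneg t)).trans
      (hv.integral_tail_anti le_rfl ht0 htQ)
  exact add_le_add hpay hval

lemma Rcpab_le_Lcpab (hv : IsValueFn Q v) (hb : IsBidPts Q M q b) {t : ℝ} (ht : t ∈ Icc 0 Q) :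
    Rcpab Q M v q b t ≤ Lcpab Q M v q b := by
  refine le_csSup ⟨(∫ y in (0 : ℝ)..Q, bhat M q b y) + ∫ y in (0 : ℝ)..Q, v y, ?_⟩ ⟨t, ht, rfl⟩
  rintro r ⟨s, hs, rfl⟩
  exact Rcpab_le hv hb hs

lemma integral_pos_sub_le_Lcpab (hv : IsValueFn Q v) (hb : IsBidPts Q M q b) {k : ℕ}
    (hk1 : 1 ≤ k) (hkM : k ≤ M) :
    ∫ x in q (k - 1)..Q, pos (v x - b k) ≤ Lcpab Q M v q b := by
  have hq0 : 0 ≤ q (k - 1) := hb.q_nonneg (by omega)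
  have hqQ : q (k - 1) ≤ Q := hb.q_le (by omega)
  refine le_trans ?_ (Rcpab_le_Lcpab hv hb ⟨hq0, hqQ⟩)
  have hhead : 0 ≤ ∫ x in (0 : ℝ)..q (k - 1), (bhat M q b x - bhat M q b (q (k - 1))) :=
    integral_nonneg hq0 fun x hx =>
      sub_nonneg.2 (hb.bhat_antitoneOn (mem_Ici.2 hx.1) (mem_Ici.2 hq0) hx.2)
  have htail : ∫ x in q (k - 1)..Q, pos (v x - b k)
      ≤ ∫ x in q (k - 1)..Q, pos (v x - bhat M q b (q (k - 1))) :=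
    integral_mono_on hqQ (hv.intervalIntegrable_pos_sub hq0 hqQ le_rfl _)
      (hv.intervalIntegrable_pos_sub hq0 hqQ le_rfl _) fun x _ =>
        pos_mono (sub_le_sub_left (hb.bhat_q_sub_one_le hk1 hkM) _)
  rw [Rcpab]
  linarith

lemma integral_bhat_add_tail_sub_le_Lcpab (hv : IsValueFn Q v) (hb : IsBidPts Q M q b) {x : ℝ}
    (hx : 0 ≤ x) (hxQ : x ≤ Q) :
    (∫ y in (0 : ℝ)..x, bhat M q b y) + (∫ y in x..Q, v y) - Q * bhat M q b x
      ≤ Lcpab Q M v q b := by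
  refine le_trans ?_ (Rcpab_le_Lcpab hv hb ⟨hx, hxQ⟩)
  have hval : ∫ y in x..Q, (v y - bhat M q b x) ≤ ∫ y in x..Q, pos (v y - bhat M q b x) :=
    integral_mono_on hxQ ((hv.intervalIntegrable_of_le hx hxQ le_rfl).sub intervalIntegrable_const)
      (hv.intervalIntegrable_pos_sub hx hxQ le_rfl _) fun y _ => le_max_left _ _
  rw [integral_sub (hv.intervalIntegrable_of_le hx hxQ le_rfl) intervalIntegrable_const,
    intervalIntegral.integral_const, smul_eq_mul] at hval
  rw [Rcpab, integral_sub (intervalIntegrable_bhat q b 0 x) intervalIntegrable_const,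
    intervalIntegral.integral_const, smul_eq_mul]
  linarith

lemma integral_bhat_add_tail_le_Lcpab (hv : IsValueFn Q v) (hb : IsBidPts Q M q b) :
    (∫ y in (0 : ℝ)..Q, bhat M q b y) + ∫ y in q M..Q, v y ≤ Lcpab Q M v q b := by
  have hzero : ∫ y in q M..Q, bhat M q b y = 0 := by
    rw [integral_congr fun y hy => hb.bhat_eq_zero (uIcc_of_le (hb.q_le le_rfl) ▸ hy).1]
    exact integral_zero
  have := integral_bhat_add_tail_sub_le_Lcpab hv hb (hb.q_nonneg le_rfl) (hb.q_le le_rfl)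
  rw [hb.bhat_eq_zero le_rfl, ← integral_add_adjacent_intervals
    (intervalIntegrable_bhat q b 0 (q M)) (intervalIntegrable_bhat q b (q M) Q), hzero] at *
  linarith

lemma integral_bhat_le_Lcpab (hv : IsValueFn Q v) (hb : IsBidPts Q M q b) :
    ∫ y in (0 : ℝ)..Q, bhat M q b y ≤ Lcpab Q M v q b := by
  linarith [integral_bhat_add_tail_le_Lcpab hv hb,
    hv.integral_tail_nonneg (hb.q_nonneg le_rfl) (hb.q_le le_rfl)]

lemma sub_mul_integral_tail_le (hv : IsValueFn Q v) (hb : IsBidPts Q M q b) {u x : ℝ}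
    (hu : 0 ≤ u) (hux : u ≤ x) (hxQ : x ≤ Q) :
    (x - u) * ∫ y in x..Q, v y ≤ (x - u) * (Lcpab Q M v q b - ∫ y in (0 : ℝ)..x, bhat M q b y)
      + Q * ((∫ y in (0 : ℝ)..x, bhat M q b y) - ∫ y in (0 : ℝ)..u, bhat M q b y) := by
  have hL := mul_le_mul_of_nonneg_left
    (integral_bhat_add_tail_sub_le_Lcpab hv hb (hu.trans hux) hxQ) (sub_nonneg.2 hux)
  have hband := mul_le_mul_of_nonneg_left (sub_mul_bhat_le hb hu hux) (hu.trans (hux.trans hxQ))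
  rw [← integral_interval_sub_left (intervalIntegrable_bhat q b 0 x)
    (intervalIntegrable_bhat q b 0 u)] at hband
  nlinarith

lemma sub_mul_integral_tail_le_add_mul (hv : IsValueFn Q v) (hb : IsBidPts Q M q b) {u x : ℝ}
    (hu : 0 ≤ u) (hux : u ≤ x) (hxQ : x ≤ Q) :
    (x - u) * ∫ y in x..Q, v y
      ≤ (x - u + Q) * (Lcpab Q M v q b - ∫ y in (0 : ℝ)..u, bhat M q b y) := by
  have hux' := integral_bhat_mono hb hu hux
  have hxL := (integral_bhat_mono hb (hu.trans hux) hxQ).trans (integral_bhat_le_Lcpab hv hb)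
  have := sub_mul_integral_tail_le hv hb hu hux hxQ
  nlinarith

lemma Lclab_le {hM : 1 ≤ M} {X : ℝ}
    (hk : ∀ k ∈ Finset.Icc 1 M, q k * b k ≤ X ∧ ∫ x in q (k - 1)..Q, pos (v x - b k) ≤ X)
    (hW : ∫ x in q M..Q, v x ≤ X) : Lclab Q M hM v q b ≤ X :=
  max_le (Finset.sup'_le _ _ fun k hk' => max_le (hk k hk').1 (hk k hk').2) hW

lemma Lclab_nonneg (hM : 1 ≤ M) (hv : IsValueFn Q v) (hb : IsBidPts Q M q b) :
    0 ≤ Lclab Q M hM v q b :=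
  (hv.integral_tail_nonneg (hb.q_nonneg le_rfl) (hb.q_le le_rfl)).trans (le_max_right _ _)

namespace IsValueFn

lemma integral_pos_sub_le_of_le_Ioo (hv : IsValueFn Q v) {t w c η : ℝ} (ht : 0 ≤ t)
    (htw : t ≤ w) (hwQ : w ≤ Q) (hc : 0 ≤ c) (hη : 0 ≤ η)
    (hle : ∀ x ∈ Ioo w Q, v x ≤ c + η) :
    ∫ x in t..Q, pos (v x - c) ≤ (w - t) * v 0 + (Q - w) * η := by
  rw [← integral_add_adjacent_intervals (hv.intervalIntegrable_pos_sub ht htw hwQ c)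
    (hv.intervalIntegrable_pos_sub (ht.trans htw) hwQ le_rfl c)]
  refine add_le_add ?_ ?_
  · refine integral_le_mul_of_le_Ioo htw (hv.intervalIntegrable_pos_sub ht htw hwQ c)
      fun x hx => pos_le_of_le ?_ (hv.2.1 0 ⟨le_rfl, ht.trans (htw.trans hwQ)⟩)
    linarith [hv.le_apply_zero ⟨ht.trans hx.1.le, hx.2.le.trans hwQ⟩]
  · exact integral_le_mul_of_le_Ioo hwQ (hv.intervalIntegrable_pos_sub (ht.trans htw) hwQ le_rfl c)
      fun x hx => pos_le_of_le (by linarith [hle x hx]) hη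

lemma sub_mul_min_le_integral_pos_sub (hv : IsValueFn Q v) {t w β θ η : ℝ} (ht : 0 ≤ t)
    (htw : t ≤ w) (hwQ : w ≤ Q) (hθ : 0 ≤ θ) (hge : ∀ x ∈ Ioo t w, β + η ≤ v x) :
    (w - t) * min θ η
      ≤ (∫ x in t..Q, pos (v x - β)) - ∫ x in t..Q, pos (v x - (β + θ)) := by
  have hint : ∀ {x y : ℝ}, 0 ≤ x → x ≤ y → y ≤ Q → IntervalIntegrable
      (fun s => pos (v s - β) - pos (v s - (β + θ))) volume x y := fun hx hxy hy =>
    (hv.intervalIntegrable_pos_sub hx hxy hy β).sub (hv.intervalIntegrable_pos_sub hx hxy hy _)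
  rw [← integral_sub (hv.intervalIntegrable_pos_sub ht (htw.trans hwQ) le_rfl β)
    (hv.intervalIntegrable_pos_sub ht (htw.trans hwQ) le_rfl _),
    ← integral_add_adjacent_intervals (hint ht htw hwQ) (hint (ht.trans htw) hwQ le_rfl)]
  have hhead := mul_le_integral_of_le_Ioo htw (hint ht htw hwQ) fun x hx =>
    min_le_pos_sub_sub_pos_sub hθ (hge x hx)
  have htail : 0 ≤ ∫ x in w..Q, (pos (v x - β) - pos (v x - (β + θ))) :=
    integral_nonneg hwQ fun x _ => sub_nonneg.2 (pos_mono (by linarith))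
  linarith

/- Either `v > β + η` on `[t, t + lam]`, where raising the level by `θ` saves `min θ η` per unit,
or the regret at level `β + θ` is at most `v 0` per unit on `[t, t + lam]` and `η` per unit
after. -/
lemma integral_pos_sub_add_le_max (hv : IsValueFn Q v) {t β θ η lam : ℝ} (ht : 0 ≤ t)
    (htQ : t ≤ Q) (hβ : 0 ≤ β) (hθ : 0 ≤ θ) (hη : 0 ≤ η) (hlam : 0 ≤ lam) :
    ∫ x in t..Q, pos (v x - (β + θ))
      ≤ max (lam * v 0 + Q * η) ((∫ x in t..Q, pos (v x - β)) - lam * min θ η) := by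
  by_cases hgain : t + lam < Q ∧ β + η < v (t + lam)
  · refine le_max_of_le_right ?_
    have := hv.sub_mul_min_le_integral_pos_sub ht (le_add_of_nonneg_right hlam) hgain.1.le hθ
      fun x hx => hgain.2.le.trans
        (hv.1 ⟨ht.trans hx.1.le, hx.2.le.trans hgain.1.le⟩ ⟨by linarith, hgain.1.le⟩ hx.2.le)
    rw [add_sub_cancel_left] at this
    linarith
  · refine le_max_of_le_left ?_
    have hle : ∀ x ∈ Ioo (min (t + lam) Q) Q, v x ≤ β + θ + η := by
      intro x hx
      have hlt : t + lam < Q := lt_of_not_ge fun h => by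
        rw [min_eq_right h] at hx
        exact hx.1.not_gt hx.2
      rw [min_eq_left hlt.le] at hx
      have hvx := hv.1 ⟨by linarith, hlt.le⟩ ⟨by linarith [hx.1], hx.2.le⟩ hx.1.le
      linarith [not_lt.1 fun h => hgain ⟨hlt, h⟩]
    have hw := hv.integral_pos_sub_le_of_le_Ioo ht (le_min (le_add_of_nonneg_right hlam) htQ)
      (min_le_right _ _) (by linarith) hη hle
    have hv0 : 0 ≤ v 0 := hv.2.1 0 ⟨le_rfl, ht.trans htQ⟩
    have hwt : min (t + lam) Q - t ≤ lam := by linarith [min_le_left (t + lam) Q]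
    have hQw : Q - min (t + lam) Q ≤ Q := by linarith [le_min (by linarith : t ≤ t + lam) htQ]
    nlinarith [mul_le_mul_of_nonneg_right hwt hv0, mul_le_mul_of_nonneg_right hQw hη]

end IsValueFn

lemma isBidPts_flat (hQ : 0 ≤ Q) {β : ℝ} (hβ : 0 ≤ β) :
    IsBidPts Q M (fun n => if n = 0 then 0 else Q) (fun _ => β) :=
  ⟨if_pos rfl, fun k _ => by dsimp only; split_ifs <;> simp_all,
    by dsimp only; split_ifs <;> simp [hQ],
    fun _ _ _ => le_rfl, hβ⟩

lemma Lclab_flat_le (hM : 1 ≤ M) (hQ : 0 ≤ Q) {β : ℝ} (hβ : 0 ≤ β) :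
    Lclab Q M hM v (fun n => if n = 0 then 0 else Q) (fun _ => β)
      ≤ max (Q * β) (∫ x in (0 : ℝ)..Q, pos (v x - β)) := by
  have hmax : 0 ≤ max (Q * β) (∫ x in (0 : ℝ)..Q, pos (v x - β)) :=
    (mul_nonneg hQ hβ).trans (le_max_left _ _)
  refine Lclab_le (fun k hk => ⟨?_, ?_⟩) ?_
  · rw [if_neg (by simp at hk; omega)]
    exact le_max_left _ _
  · rcases eq_or_ne k 1 with rfl | hk1
    · simp
    · rw [if_neg (by simp at hk; omega), integral_same]
      exact hmax
  · rw [if_neg (by omega), integral_same]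
    exact hmax

lemma exists_pos_le_Lcpab (hQ : 0 < Q) (hv : IsValueFn Q v)
    (hvpos : ∀ x ∈ Ico (0 : ℝ) Q, 0 < v x) :
    ∃ κ > 0, ∀ q b, IsBidPts Q M q b → κ ≤ Lcpab Q M v q b := by
  refine ⟨(∫ y in Q / 2..Q, v y) / 3,
    div_pos (hv.integral_tail_pos hvpos (half_pos hQ).le (half_lt_self hQ)) three_pos,
    fun q b hb => ?_⟩
  have := sub_mul_integral_tail_le_add_mul hv hb le_rfl (half_pos hQ).le (half_le_self hQ.le)
  simp only [integral_same, sub_zero] at this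
  nlinarith

lemma exists_sub_le_Lcpab_of_integral_bhat_le (hQ : 0 < Q) (hv : IsValueFn Q v) {ε : ℝ}
    (hε : 0 < ε) : ∃ ρ > 0, ∀ q b, IsBidPts Q M q b → ∫ y in (0 : ℝ)..Q, bhat M q b y ≤ ρ →
      (∫ y in (0 : ℝ)..Q, v y) - ε ≤ Lcpab Q M v q b := by
  obtain ⟨x, hx0, hxQ, hxv⟩ :=
    exists_pos_le_mul_le hQ (hv.2.1 0 ⟨le_rfl, hQ.le⟩) (half_pos hε)
  refine ⟨x * ε / (2 * Q), by positivity, fun q b hb hP => ?_⟩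
  have hcore := sub_mul_integral_tail_le hv hb le_rfl hx0.le hxQ
  simp only [integral_same, sub_zero] at hcore
  have hPx := (integral_bhat_mono hb hx0.le hxQ).trans hP
  have hPx0 : 0 ≤ ∫ y in (0 : ℝ)..x, bhat M q b y :=
    integral_nonneg hx0.le fun y _ => hb.bhat_nonneg y
  have hρ : Q * (x * ε / (2 * Q)) = x * (ε / 2) := by field_simp
  have htail : ∫ y in x..Q, v y ≤ Lcpab Q M v q b + ε / 2 := by
    refine le_of_mul_le_mul_left ?_ hx0
    nlinarith
  have hhead := hv.integral_le_mul le_rfl hx0.le hxQ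
  rw [← integral_add_adjacent_intervals (hv.intervalIntegrable_of_le le_rfl hx0.le hxQ)
    (hv.intervalIntegrable_of_le hx0.le hxQ le_rfl)]
  linarith

lemma exists_flat_bid_gap (hQ : 0 < Q) (hM : 1 ≤ M) (hv : IsValueFn Q v)
    (hvpos : ∀ x ∈ Ico (0 : ℝ) Q, 0 < v x) :
    ∃ δ > 0, ∃ ρ > 0, ∃ q' b', IsBidPts Q M q' b' ∧ ∀ q b, IsBidPts Q M q b →
      ∫ y in (0 : ℝ)..Q, bhat M q b y ≤ ρ → Lclab Q M hM v q' b' + δ ≤ Lcpab Q M v q b := by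
  set W := ∫ y in (0 : ℝ)..Q, v y
  have hW : 0 < W := hv.integral_tail_pos hvpos le_rfl hQ
  set β := W / (2 * Q)
  have hβ : 0 < β := by positivity
  have hvi := hv.intervalIntegrable_of_le le_rfl hQ.le le_rfl
  have hposi := hv.intervalIntegrable_pos_sub le_rfl hQ.le le_rfl β
  have hTW : ∫ x in (0 : ℝ)..Q, pos (v x - β) < W := by
    have := intervalIntegral_pos_of_pos_on (hvi.sub hposi) (fun x hx => by
      have := hvpos x ⟨hx.1.le, hx.2⟩
      unfold pos
      rw [max_def]
      split_ifs <;> linarith) hQ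
    rw [integral_sub hvi hposi] at this
    linarith
  have hQβ : Q * β ≤ ∫ x in (0 : ℝ)..Q, pos (v x - β) := by
    have := integral_mono_on hQ.le (hvi.sub intervalIntegrable_const) hposi fun x _ =>
      le_max_left (v x - β) 0
    rw [integral_sub hvi intervalIntegrable_const, intervalIntegral.integral_const, smul_eq_mul,
      sub_zero] at this
    have hQβ' : Q * β = W / 2 := by simp only [β]; field_simp
    linarith
  obtain ⟨ρ, hρ, hsmall⟩ := exists_sub_le_Lcpab_of_integral_bhat_le (M := M) hQ hv
    (half_pos (sub_pos.2 hTW))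
  refine ⟨(W - ∫ x in (0 : ℝ)..Q, pos (v x - β)) / 2, half_pos (sub_pos.2 hTW), ρ, hρ, _, _,
    isBidPts_flat hQ.le hβ.le, fun q b hb hP => ?_⟩
  have hflat := Lclab_flat_le hM hQ.le hβ.le (v := v)
  rw [max_eq_right hQβ] at hflat
  linarith [hsmall q b hb hP]

lemma IsBidPts.min_add (hb : IsBidPts Q M q b) {z θ : ℝ} (hz : 0 ≤ z) (hθ : 0 ≤ θ) :
    IsBidPts Q M (fun n => min (q n) z) (fun n => b n + θ) :=
  ⟨by simp [hb.1, hz], fun k hk => min_le_min_right z (hb.2.1 k hk),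
    (min_le_left _ _).trans hb.2.2.1,
    fun k hk1 hkM => by dsimp only; linarith [hb.2.2.2.1 k hk1 hkM],
    add_nonneg hb.2.2.2.2 hθ⟩

lemma min_mul_add_div_le_Lcpab (hv : IsValueFn Q v) (hb : IsBidPts Q M q b) {k : ℕ}
    (hk1 : 1 ≤ k) (hkM : k ≤ M) {z Δ : ℝ} (hz : 0 ≤ z) (hΔ : 0 < Δ) (hzΔ : z + Δ ≤ Q) :
    min (q k) z * b k + Δ * (∫ x in z + Δ..Q, v x) / (Δ + Q) ≤ Lcpab Q M v q b := by
  have hu0 : 0 ≤ min (q k) z := le_min (hb.q_nonneg hkM) hz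
  have hpay := mul_le_integral_bhat hb hk1 hkM hu0 (min_le_left _ _)
  have hcore := sub_mul_integral_tail_le_add_mul hv hb hu0 (le_add_of_nonneg_right hΔ.le)
    (by linarith [min_le_right (q k) z])
  rw [add_sub_cancel_left] at hcore
  have htail := hv.integral_tail_anti (hu0.trans (le_add_of_nonneg_right hΔ.le))
    (by linarith [min_le_right (q k) z]) hzΔ
  have hhead : Δ * (∫ x in z + Δ..Q, v x) / (Δ + Q)
      ≤ Lcpab Q M v q b - ∫ y in (0 : ℝ)..min (q k) z, bhat M q b y := by
    rw [div_le_iff₀' (by linarith)]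
    linarith [mul_le_mul_of_nonneg_left htail hΔ.le]
  linarith

lemma Lclab_min_add_add_le (hM : 1 ≤ M) (hv : IsValueFn Q v) (hb : IsBidPts Q M q b)
    {z Δ θ lam η δ : ℝ} (hz : 0 ≤ z) (hΔ : 0 < Δ) (hzΔ : z + Δ ≤ Q) (hθ : 0 ≤ θ) (hη : 0 ≤ η)
    (hlam : 0 ≤ lam)
    (htail : (∫ x in z..Q, v x) + δ ≤ Lcpab Q M v q b)
    (hsmall : lam * v 0 + Q * η + δ ≤ Lcpab Q M v q b)
    (hgain : δ ≤ lam * min θ η)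
    (hhead : δ + Q * θ ≤ Δ * (∫ x in z + Δ..Q, v x) / (Δ + Q))
    (hpay : δ ≤ ∫ x in (0 : ℝ)..Q, bhat M q b x) :
    Lclab Q M hM v (fun n => min (q n) z) (fun n => b n + θ) + δ ≤ Lcpab Q M v q b := by
  have hzQ : z ≤ Q := by linarith
  rw [← le_sub_iff_add_le]
  refine Lclab_le (fun k hk => ?_) ?_
  · obtain ⟨hk1, hkM⟩ := Finset.mem_Icc.1 hk
    refine ⟨?_, ?_⟩
    · have huθ : min (q k) z * θ ≤ Q * θ :=
        mul_le_mul_of_nonneg_right ((min_le_right _ _).trans hzQ) hθ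
      linarith [mul_add (min (q k) z) (b k) θ, min_mul_add_div_le_Lcpab hv hb hk1 hkM hz hΔ hzΔ]
    · rcases le_total (q (k - 1)) z with hle | hgt
      · rw [min_eq_left hle]
        refine (hv.integral_pos_sub_add_le_max (hb.q_nonneg (by omega)) (hb.q_le (by omega))
          (hb.b_nonneg hk1 hkM) hθ hη hlam).trans (max_le (by linarith) ?_)
        linarith [integral_pos_sub_le_Lcpab hv hb hk1 hkM]
      · rw [min_eq_right hgt]
        linarith [hv.integral_pos_sub_le hz hzQ (add_nonneg (hb.b_nonneg hk1 hkM) hθ)]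
  · rcases le_total (q M) z with hle | hgt
    · rw [min_eq_left hle]
      linarith [integral_bhat_add_tail_le_Lcpab hv hb]
    · rw [min_eq_right hgt]
      linarith

lemma exists_shrink_raise_gap (hQ : 0 < Q) (hM : 1 ≤ M) (hv : IsValueFn Q v)
    (hvpos : ∀ x ∈ Ico (0 : ℝ) Q, 0 < v x) {κ ρ : ℝ} (hκ : 0 < κ) (hρ : 0 < ρ) :
    ∃ δ > 0, ∀ q b, IsBidPts Q M q b → κ ≤ Lcpab Q M v q b →
      ρ ≤ ∫ y in (0 : ℝ)..Q, bhat M q b y →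
      ∃ q' b', IsBidPts Q M q' b' ∧ Lclab Q M hM v q' b' + δ ≤ Lcpab Q M v q b := by
  obtain ⟨s, hs0, hsQ, hsv⟩ :=
    exists_pos_le_mul_le hQ (hv.2.1 0 ⟨le_rfl, hQ.le⟩) (by positivity : 0 < κ / 4)
  set c := ∫ x in Q - s / 2..Q, v x
  have hc : 0 < c := hv.integral_tail_pos hvpos (by linarith) (by linarith)
  set θ := s / 2 * c / (2 * Q * (s / 2 + Q))
  have hθ : 0 < θ := by positivity
  set δ := min (min (κ / 4) (s * min θ (κ / (4 * Q)))) (min (Q * θ) ρ)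
  have hδ : 0 < δ := by positivity
  have hδκ : δ ≤ κ / 4 := (min_le_left _ _).trans (min_le_left _ _)
  have hδθ : δ ≤ Q * θ := (min_le_right _ _).trans (min_le_left _ _)
  refine ⟨δ, hδ, fun q b hb hκL hρP =>
    ⟨_, _, hb.min_add (z := Q - s) (by linarith) hθ.le, ?_⟩⟩
  have hz := hv.integral_le_mul (x := Q - s) (by linarith) (by linarith) le_rfl
  rw [sub_sub_cancel] at hz
  refine Lclab_min_add_add_le hM hv hb (Δ := s / 2) (lam := s) (η := κ / (4 * Q))
    (by linarith) (by positivity) (by linarith) hθ.le (by positivity) hs0.le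
    (by linarith) ?_ ((min_le_left _ _).trans (min_le_right _ _)) ?_
    (((min_le_right _ _).trans (min_le_right _ _)).trans hρP)
  · have : Q * (κ / (4 * Q)) = κ / 4 := by field_simp
    linarith
  · rw [show Q - s + s / 2 = Q - s / 2 by ring]
    have : s / 2 * c / (s / 2 + Q) = 2 * (Q * θ) := by simp only [θ]; field_simp
    linarith

lemma exists_uniform_gap (hQ : 0 < Q) (hM : 1 ≤ M) (hv : IsValueFn Q v)
    (hvpos : ∀ x ∈ Ico (0 : ℝ) Q, 0 < v x) :
    ∃ δ > 0, ∀ q b, IsBidPts Q M q b →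
      ∃ q' b', IsBidPts Q M q' b' ∧ Lclab Q M hM v q' b' + δ ≤ Lcpab Q M v q b := by
  obtain ⟨δ₁, hδ₁, ρ, hρ, q₀, b₀, hb₀, hflat⟩ := exists_flat_bid_gap hQ hM hv hvpos
  obtain ⟨κ, hκ, hκL⟩ := exists_pos_le_Lcpab (M := M) hQ hv hvpos
  obtain ⟨δ₂, hδ₂, hshrink⟩ := exists_shrink_raise_gap hQ hM hv hvpos hκ hρ
  refine ⟨min δ₁ δ₂, lt_min hδ₁ hδ₂, fun q b hb => ?_⟩
  rcases le_total (∫ y in (0 : ℝ)..Q, bhat M q b y) ρ with hP | hP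
  · exact ⟨q₀, b₀, hb₀, by linarith [hflat q b hb hP, min_le_left δ₁ δ₂]⟩
  · obtain ⟨q', b', hb', h⟩ := hshrink q b hb (hκL q b hb) hP
    exact ⟨q', b', hb', by linarith [min_le_right δ₁ δ₂]⟩

/-- if `v > 0` on `[0,Q)`, minimax loss in the bidpoint-constrained
uniform-price auction is strictly lower than in the bidpoint-constrained pay-as-bid
auction. -/
theorem constrained_minimax_loss_lab_lt_pab
    (Q : ℝ) (hQ : 0 < Q) (M : ℕ) (hM : 1 ≤ M)
    (v : ℝ → ℝ) (hv : IsValueFn Q v) (hvpos : ∀ x ∈ Set.Ico (0:ℝ) Q, 0 < v x) :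
    sInf {L : ℝ | ∃ q b, IsBidPts Q M q b ∧ L = Lclab Q M hM v q b} <
      sInf {L : ℝ | ∃ q b, IsBidPts Q M q b ∧ L = Lcpab Q M v q b} := by
  obtain ⟨δ, hδ, hgap⟩ := exists_uniform_gap hQ hM hv hvpos
  have hbdd : BddBelow {L : ℝ | ∃ q b, IsBidPts Q M q b ∧ L = Lclab Q M hM v q b} :=
    ⟨0, by rintro _ ⟨q, b, hb, rfl⟩; exact Lclab_nonneg hM hv hb⟩
  have hzero : IsBidPts Q M (fun _ => 0) (fun _ => 0) :=
    ⟨rfl, fun _ _ => le_rfl, hQ.le, fun _ _ _ => le_rfl, le_rfl⟩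
  refine (lt_add_of_pos_right _ hδ).trans_le (le_csInf ⟨_, _, _, hzero, rfl⟩ ?_)
  rintro _ ⟨q, b, hb, rfl⟩
  obtain ⟨q', b', hb', hle⟩ := hgap q b hb
  linarith [csInf_le hbdd ⟨q', b', hb', rfl⟩]

end
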